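/- Let π be a secant plane. Then (a) the set γ(π) is an arc in the projective plane π, and (b) every line of π meeting γ(π) in exactly two points belongs to S_π. -/

import Mathlib

/-!
Fix a line `l` of the secant plane `π` and count the pairs `(p, m)` with `p` a point of `l`
and `m ∈ S_π` through `p`. Every line of `S_π` other than `l` meets `l` in exactly one point,
so the count is `|S_π| + q·[l ∈ S] = q(q+1)/2 + q·[l ∈ S]`. Writing `q = 2r+1`, (P2b) says
that each of the `q+1` points of `l` lies on `r`, `r+1` or `q` lines of `S_π`, the last
exactly at the points of `γ(π)`. With `c = |γ(π) ∩ l|` this squeezes the count between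
`(q+1)r + c(r+1)` and `(q+1)(r+1) + cr`, which forces `c ≤ 1` when `l ∉ S`, `c ≤ 2` always,
and `c ≥ 1` when `l ∈ S`. Since `S_π` is nonempty, the last case shows that `γ(π)` is
nonempty.
-/

open Submodule Set

/-- The points of `PG(3,q)`: the 1-dimensional subspaces of a 4-dimensional
vector space over the field `K` of order `q`. -/
def pgPoint (K : Type) [Field K] : Set (Submodule K (Fin 4 → K)) :=
  {W | Module.finrank K ↥W = 1}

/-- The lines of `PG(3,q)`: the 2-dimensional subspaces. -/
def pgLine (K : Type) [Field K] : Set (Submodule K (Fin 4 → K)) :=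
  {W | Module.finrank K ↥W = 2}

/-- The planes of `PG(3,q)`: the 3-dimensional subspaces. -/
def pgPlane (K : Type) [Field K] : Set (Submodule K (Fin 4 → K)) :=
  {W | Module.finrank K ↥W = 3}

/-- The lines of the family `S` passing through the point `p`. -/
def linesThru (K : Type) [Field K] (S : Set (Submodule K (Fin 4 → K)))
    (p : Submodule K (Fin 4 → K)) : Set (Submodule K (Fin 4 → K)) :=
  {l | l ∈ S ∧ p ≤ l}

/-- The lines of the family `S` contained in the plane `π` (the set `S_π`). -/
def linesIn (K : Type) [Field K] (S : Set (Submodule K (Fin 4 → K)))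
    (π : Submodule K (Fin 4 → K)) : Set (Submodule K (Fin 4 → K)) :=
  {l | l ∈ S ∧ l ≤ π}

/-- The lines of `S_π` belonging to the pencil of lines of the plane `π`
through the point `p`. -/
def pencilS (K : Type) [Field K] (S : Set (Submodule K (Fin 4 → K)))
    (p π : Submodule K (Fin 4 → K)) : Set (Submodule K (Fin 4 → K)) :=
  {l | l ∈ S ∧ p ≤ l ∧ l ≤ π}

/-- Property (P1): every point lies on exactly `q(q+1)/2` or exactly `q^2`
lines of `S`, and both numbers are attained. -/
def P1 (K : Type) [Field K] (S : Set (Submodule K (Fin 4 → K))) (q : ℕ) : Prop :=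
  (∀ p ∈ pgPoint K, (linesThru K S p).ncard = q * (q + 1) / 2 ∨
      (linesThru K S p).ncard = q ^ 2) ∧
  (∃ p ∈ pgPoint K, (linesThru K S p).ncard = q * (q + 1) / 2) ∧
  (∃ p ∈ pgPoint K, (linesThru K S p).ncard = q ^ 2)

/-- Property (P2): every plane contains exactly `q(q+1)/2` or exactly `q^2`
lines of `S`. -/
def P2 (K : Type) [Field K] (S : Set (Submodule K (Fin 4 → K))) (q : ℕ) : Prop :=
  ∀ π ∈ pgPlane K, (linesIn K S π).ncard = q * (q + 1) / 2 ∨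
    (linesIn K S π).ncard = q ^ 2

/-- Property (P2a): if a plane contains `q^2` lines of `S`, then every pencil of
lines in that plane contains `0` or `q` lines of `S`. -/
def P2a (K : Type) [Field K] (S : Set (Submodule K (Fin 4 → K))) (q : ℕ) : Prop :=
  ∀ π ∈ pgPlane K, (linesIn K S π).ncard = q ^ 2 →
    ∀ p ∈ pgPoint K, p ≤ π →
      (pencilS K S p π).ncard = 0 ∨ (pencilS K S p π).ncard = q

/-- Property (P2b): if a plane contains `q(q+1)/2` lines of `S`, then every
pencil of lines in that plane contains `(q-1)/2`, `(q+1)/2` or `q` lines of `S`. -/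
def P2b (K : Type) [Field K] (S : Set (Submodule K (Fin 4 → K))) (q : ℕ) : Prop :=
  ∀ π ∈ pgPlane K, (linesIn K S π).ncard = q * (q + 1) / 2 →
    ∀ p ∈ pgPoint K, p ≤ π →
      (pencilS K S p π).ncard = (q - 1) / 2 ∨
      (pencilS K S p π).ncard = (q + 1) / 2 ∨
      (pencilS K S p π).ncard = q

/-- A point is black if it lies on exactly `q^2` lines of `S`. -/
def IsBlack (K : Type) [Field K] (S : Set (Submodule K (Fin 4 → K))) (q : ℕ)
    (p : Submodule K (Fin 4 → K)) : Prop :=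
  p ∈ pgPoint K ∧ (linesThru K S p).ncard = q ^ 2

/-- A plane is tangent if it contains exactly `q^2` lines of `S`. -/
def IsTangent (K : Type) [Field K] (S : Set (Submodule K (Fin 4 → K))) (q : ℕ)
    (π : Submodule K (Fin 4 → K)) : Prop :=
  π ∈ pgPlane K ∧ (linesIn K S π).ncard = q ^ 2

/-- A plane is secant if it contains exactly `q(q+1)/2` lines of `S`. -/
def IsSecant (K : Type) [Field K] (S : Set (Submodule K (Fin 4 → K))) (q : ℕ)
    (π : Submodule K (Fin 4 → K)) : Prop :=
  π ∈ pgPlane K ∧ (linesIn K S π).ncard = q * (q + 1) / 2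

/-- For a secant plane `π`, the set `α(π)` of points of `π` lying on exactly
`(q-1)/2` lines of `S_π`. -/
def alphaSet (K : Type) [Field K] (S : Set (Submodule K (Fin 4 → K))) (q : ℕ)
    (π : Submodule K (Fin 4 → K)) : Set (Submodule K (Fin 4 → K)) :=
  {p | p ∈ pgPoint K ∧ p ≤ π ∧ (pencilS K S p π).ncard = (q - 1) / 2}

/-- For a secant plane `π`, the set `β(π)` of points of `π` lying on exactly
`(q+1)/2` lines of `S_π`. -/
def betaSet (K : Type) [Field K] (S : Set (Submodule K (Fin 4 → K))) (q : ℕ)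
    (π : Submodule K (Fin 4 → K)) : Set (Submodule K (Fin 4 → K)) :=
  {p | p ∈ pgPoint K ∧ p ≤ π ∧ (pencilS K S p π).ncard = (q + 1) / 2}

/-- For a secant plane `π`, the set `γ(π)` of points of `π` lying on exactly
`q` lines of `S_π`. -/
def gammaSet (K : Type) [Field K] (S : Set (Submodule K (Fin 4 → K))) (q : ℕ)
    (π : Submodule K (Fin 4 → K)) : Set (Submodule K (Fin 4 → K)) :=
  {p | p ∈ pgPoint K ∧ p ≤ π ∧ (pencilS K S p π).ncard = q}

section Geometry

variable {K V : Type*} [Field K] [AddCommGroup V] [Module K V]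

open Module

theorem finrank_one_le_eq_image_map_subtype (W : Submodule K V) :
    {p : Submodule K V | finrank K p = 1 ∧ p ≤ W} =
      map W.subtype '' {H : Submodule K W | finrank K H = 1} := by
  ext p
  constructor
  · rintro ⟨hp, hpW⟩
    refine ⟨comap W.subtype p, ?_, ?_⟩
    · rwa [Set.mem_ofPred_eq, ← finrank_map_subtype_eq, map_comap_subtype, inf_of_le_right hpW]
    · rw [map_comap_subtype, inf_of_le_right hpW]
  · rintro ⟨H, hH, rfl⟩
    exact ⟨(finrank_map_subtype_eq W H).trans hH, map_subtype_le W H⟩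

theorem ncard_finrank_one_le_eq_card_projectivization (W : Submodule K V) :
    {p : Submodule K V | finrank K p = 1 ∧ p ≤ W}.ncard = Nat.card (Projectivization K W) := by
  rw [finrank_one_le_eq_image_map_subtype,
    ncard_image_of_injective _ (map_injective_of_injective W.injective_subtype),
    ← Nat.card_coe_set_eq]
  exact Nat.card_congr (Projectivization.equivSubmodule K W).symm

theorem ncard_finrank_one_le_of_finrank_eq_two [Finite K] {W : Submodule K V}
    (hW : finrank K W = 2) :
    {p : Submodule K V | finrank K p = 1 ∧ p ≤ W}.ncard = Nat.card K + 1 := by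
  rw [ncard_finrank_one_le_eq_card_projectivization, Projectivization.card_of_finrank_two K W hW]

theorem finrank_inf_eq_one_of_finrank_eq_two [FiniteDimensional K V] {l m : Submodule K V}
    (hl : finrank K l = 2) (hm : finrank K m = 2) (hne : l ≠ m)
    (hsup : finrank K ↥(l ⊔ m) ≤ 3) : finrank K ↥(l ⊓ m) = 1 := by
  have hlt : l < l ⊔ m := by
    refine lt_of_le_of_ne le_sup_left fun h => hne ?_
    exact (eq_of_le_of_finrank_eq (h ▸ le_sup_right) (hm.trans hl.symm)).symm
  have := finrank_lt_finrank_of_lt hlt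
  have := finrank_sup_add_finrank_inf_eq l m
  omega

end Geometry

theorem le_two_of_double_count_bounds {q r c : ℕ} {P : Prop} [Decidable P]
    (hqr : q = 2 * r + 1) (hr : 1 ≤ r)
    (hlow : (q + 1) * r + c * (r + 1) ≤ q * (r + 1) + (if P then q else 0))
    (hup : q * (r + 1) + (if P then q else 0) ≤ (q + 1) * (r + 1) + c * r) :
    c ≤ 2 ∧ (c = 2 → P) ∧ (P → c ≠ 0) := by
  subst hqr
  split_ifs at hlow hup with hP
  · refine ⟨by nlinarith, fun _ => hP, fun _ hc => ?_⟩
    subst hc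
    nlinarith
  · have : c ≤ 1 := by nlinarith
    exact ⟨by omega, fun hc => by omega, fun h => absurd h hP⟩

section PG3

variable {K : Type} [Field K]

open Classical in
theorem ncard_pencilS_bounds {S : Set (Submodule K (Fin 4 → K))} {q r : ℕ} (hqr : q = 2 * r + 1)
    {π p : Submodule K (Fin 4 → K)} (hπ : IsSecant K S q π) (h2b : P2b K S q)
    (hp : p ∈ pgPoint K) (hpπ : p ≤ π) :
    r + (if p ∈ gammaSet K S q π then r + 1 else 0) ≤ (pencilS K S p π).ncard ∧
      (pencilS K S p π).ncard ≤ r + 1 + (if p ∈ gammaSet K S q π then r else 0) := by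
  have hγ : p ∈ gammaSet K S q π ↔ (pencilS K S p π).ncard = q := by
    simp only [gammaSet, Set.mem_ofPred_eq, hp, hpπ, true_and]
  have h := h2b π hπ.1 hπ.2 p hp hpπ
  split_ifs with hpγ <;> rw [hγ] at hpγ <;> omega

variable [Finite K]

noncomputable def pointsOn (K : Type) [Field K] [Finite K] (l : Submodule K (Fin 4 → K)) :
    Finset (Submodule K (Fin 4 → K)) :=
  (Set.toFinite {p | p ∈ pgPoint K ∧ p ≤ l}).toFinset

@[simp]
theorem mem_pointsOn {l p : Submodule K (Fin 4 → K)} :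
    p ∈ pointsOn K l ↔ p ∈ pgPoint K ∧ p ≤ l :=
  Set.Finite.mem_toFinset _

theorem card_pointsOn {l : Submodule K (Fin 4 → K)} (hl : l ∈ pgLine K) :
    (pointsOn K l).card = Nat.card K + 1 := by
  rw [pointsOn, ← ncard_eq_toFinset_card]
  exact ncard_finrank_one_le_of_finrank_eq_two hl

open Classical in
theorem filter_pointsOn_le_of_ne {π l m : Submodule K (Fin 4 → K)} (hπ : π ∈ pgPlane K)
    (hl : l ∈ pgLine K) (hm : m ∈ pgLine K) (hlπ : l ≤ π) (hmπ : m ≤ π)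
    (hne : m ≠ l) :
    {p ∈ pointsOn K l | p ≤ m} = {m ⊓ l} := by
  have hinf : Module.finrank K ↥(m ⊓ l) = 1 :=
    finrank_inf_eq_one_of_finrank_eq_two hm hl hne
      ((Submodule.finrank_mono (sup_le hmπ hlπ)).trans_eq hπ)
  ext p
  simp only [Finset.mem_filter, mem_pointsOn, Finset.mem_singleton]
  constructor
  · rintro ⟨⟨hp, hpl⟩, hpm⟩
    exact eq_of_le_of_finrank_eq (le_inf hpm hpl) (hp.trans hinf.symm)
  · rintro rfl
    exact ⟨⟨hinf, inf_le_right⟩, inf_le_left⟩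

open Classical in
theorem sum_ncard_pencilS_pointsOn {S : Set (Submodule K (Fin 4 → K))} (hS : S ⊆ pgLine K)
    {π l : Submodule K (Fin 4 → K)} (hπ : π ∈ pgPlane K) (hl : l ∈ pgLine K)
    (hlπ : l ≤ π) :
    ∑ p ∈ pointsOn K l, (pencilS K S p π).ncard =
      (linesIn K S π).ncard + if l ∈ S then Nat.card K else 0 := by
  set M := (linesIn K S π).toFinite.toFinset
  have hM : ∀ m, m ∈ M ↔ m ∈ S ∧ m ≤ π := fun m => Set.Finite.mem_toFinset _
  have hpencil (p) : (pencilS K S p π).ncard = (M.bipartiteAbove (· ≤ ·) p).card := by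
    rw [← ncard_coe_finset]
    congr 1
    ext m
    simp only [pencilS, Set.mem_ofPred_eq, Finset.coe_filter, Finset.bipartiteAbove, hM]
    tauto
  have hbelow : ∀ m ∈ M, ((pointsOn K l).bipartiteBelow (· ≤ ·) m).card =
      1 + if m = l then Nat.card K else 0 := by
    intro m hm
    rw [hM] at hm
    by_cases hml : m = l
    · subst hml
      rw [if_pos rfl, Finset.bipartiteBelow, Finset.filter_true_of_mem fun p hp =>
        (mem_pointsOn.1 hp).2, card_pointsOn hl, add_comm]
    · rw [if_neg hml, Finset.bipartiteBelow,
        filter_pointsOn_le_of_ne hπ hl (hS hm.1) hlπ hm.2 hml, Finset.card_singleton]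
  rw [Finset.sum_congr rfl fun p _ => hpencil p,
    Finset.sum_card_bipartiteAbove_eq_sum_card_bipartiteBelow, Finset.sum_congr rfl hbelow,
    Finset.sum_add_distrib, Finset.sum_const, smul_eq_mul, mul_one, Finset.sum_ite_eq',
    ← ncard_eq_toFinset_card]
  simp only [hM, hlπ, and_true]

open Classical in
theorem ncard_linesIn_bounds {S : Set (Submodule K (Fin 4 → K))} (hS : S ⊆ pgLine K) {q r : ℕ}
    (hq : Nat.card K = q) (hqr : q = 2 * r + 1) {π l : Submodule K (Fin 4 → K)}
    (hπ : IsSecant K S q π) (h2b : P2b K S q) (hl : l ∈ pgLine K) (hlπ : l ≤ π) :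
    (q + 1) * r + {p | p ∈ gammaSet K S q π ∧ p ≤ l}.ncard * (r + 1) ≤
        (linesIn K S π).ncard + (if l ∈ S then q else 0) ∧
      (linesIn K S π).ncard + (if l ∈ S then q else 0) ≤
        (q + 1) * (r + 1) + {p | p ∈ gammaSet K S q π ∧ p ≤ l}.ncard * r := by
  have hc : {p | p ∈ gammaSet K S q π ∧ p ≤ l}.ncard =
      ((pointsOn K l).filter (· ∈ gammaSet K S q π)).card := by
    rw [← ncard_coe_finset]
    congr 1
    ext p
    rw [Finset.mem_coe, Finset.mem_filter, mem_pointsOn]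
    simp only [gammaSet, Set.mem_ofPred_eq]
    exact ⟨fun ⟨⟨hp, _, h⟩, hpl⟩ => ⟨⟨hp, hpl⟩, hp, hpl.trans hlπ, h⟩,
      fun ⟨⟨hp, hpl⟩, _, _, h⟩ => ⟨⟨hp, hpl.trans hlπ, h⟩, hpl⟩⟩
  have hsum (a b : ℕ) : ∑ p ∈ pointsOn K l, (a + if p ∈ gammaSet K S q π then b else 0) =
      (q + 1) * a + {p | p ∈ gammaSet K S q π ∧ p ≤ l}.ncard * b := by
    rw [Finset.sum_add_distrib, ← Finset.sum_filter, Finset.sum_const, Finset.sum_const,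
      card_pointsOn hl, hq, hc, smul_eq_mul, smul_eq_mul]
  have htotal := sum_ncard_pencilS_pointsOn hS hπ.1 hl hlπ
  rw [hq] at htotal
  rw [← htotal, ← hsum, ← hsum]
  have hbounds (p) (hp : p ∈ pointsOn K l) := ncard_pencilS_bounds hqr hπ h2b
    (mem_pointsOn.1 hp).1 ((mem_pointsOn.1 hp).2.trans hlπ)
  exact ⟨Finset.sum_le_sum fun p hp => (hbounds p hp).1,
    Finset.sum_le_sum fun p hp => (hbounds p hp).2⟩

theorem ncard_gammaSet_on_line {S : Set (Submodule K (Fin 4 → K))} (hS : S ⊆ pgLine K) {q : ℕ}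
    (hq : Nat.card K = q) (hq_odd : Odd q) {π l : Submodule K (Fin 4 → K)}
    (hπ : IsSecant K S q π) (h2b : P2b K S q) (hl : l ∈ pgLine K) (hlπ : l ≤ π) :
    {p | p ∈ gammaSet K S q π ∧ p ≤ l}.ncard ≤ 2 ∧
      ({p | p ∈ gammaSet K S q π ∧ p ≤ l}.ncard = 2 → l ∈ S) ∧
      (l ∈ S → {p | p ∈ gammaSet K S q π ∧ p ≤ l}.ncard ≠ 0) := by
  classical
  obtain ⟨r, hqr⟩ := hq_odd
  have hr : 1 ≤ r := by have : 1 < Nat.card K := Finite.one_lt_card; omega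
  have hN : (linesIn K S π).ncard = q * (r + 1) := by
    rw [hπ.2, show q + 1 = 2 * (r + 1) by omega, mul_left_comm, Nat.mul_div_cancel_left _ two_pos]
  obtain ⟨hlow, hup⟩ := ncard_linesIn_bounds hS hq hqr hπ h2b hl hlπ
  rw [hN] at hlow hup
  exact le_two_of_double_count_bounds hqr hr hlow hup

end PG3

theorem stmt_8_general (K : Type) [Field K] [Fintype K] (q : ℕ) (hq : Fintype.card K = q)
    (hq_odd : Odd q) (S : Set (Submodule K (Fin 4 → K))) (hS : S ⊆ pgLine K)
    (h2b : P2b K S q) :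
    ∀ π, IsSecant K S q π →
      ((gammaSet K S q π).Nonempty ∧
        (∀ l ∈ pgLine K, l ≤ π →
          {p | p ∈ gammaSet K S q π ∧ p ≤ l}.ncard ≤ 2)) ∧
      (∀ l ∈ pgLine K, l ≤ π →
        {p | p ∈ gammaSet K S q π ∧ p ≤ l}.ncard = 2 → l ∈ S) := by
  intro π hπ
  have hq' : Nat.card K = q := Nat.card_eq_fintype_card.trans hq
  have hline (l) (hl : l ∈ pgLine K) (hlπ : l ≤ π) :=
    ncard_gammaSet_on_line hS hq' hq_odd hπ h2b hl hlπ
  refine ⟨⟨?_, fun l hl hlπ => (hline l hl hlπ).1⟩, fun l hl hlπ => (hline l hl hlπ).2.1⟩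
  have hq2 : 2 ≤ q := hq' ▸ Finite.one_lt_card
  obtain ⟨m, hmS, hmπ⟩ : (linesIn K S π).Nonempty := by
    refine nonempty_of_ncard_ne_zero (hπ.2 ▸ (Nat.div_pos ?_ two_pos).ne')
    nlinarith
  obtain ⟨p, hp, -⟩ := nonempty_of_ncard_ne_zero ((hline m (hS hmS) hmπ).2.2 hmS)
  exact ⟨p, hp⟩

/-- For a secant plane `π`: (a) `γ(π)` is an arc in `π` (nonempty
and no line of `π` meets it in more than two points), and (b) every line of `π`
meeting `γ(π)` in exactly two points belongs to `S_π`. -/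
theorem stmt_8 (K : Type) [Field K] [Fintype K] (q : ℕ) (hq : Fintype.card K = q)
    (hq_odd : Odd q) (S : Set (Submodule K (Fin 4 → K))) (hS : S ⊆ pgLine K)
    (h1 : P1 K S q) (h2 : P2 K S q) (h2a : P2a K S q) (h2b : P2b K S q) :
    ∀ π, IsSecant K S q π →
      ((gammaSet K S q π).Nonempty ∧
        (∀ l ∈ pgLine K, l ≤ π →
          {p | p ∈ gammaSet K S q π ∧ p ≤ l}.ncard ≤ 2)) ∧
      (∀ l ∈ pgLine K, l ≤ π →
        {p | p ∈ gammaSet K S q π ∧ p ≤ l}.ncard = 2 → l ∈ S) :=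
  stmt_8_general K q hq hq_odd S hS h2b
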